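/- arXiv:math/0002148 — 2 statements merged into one kernel-verified Lean document; each statement's English description precedes it below -/
import Mathlib

section
/- If f : ℝ → ℂ is continuous and 2π-periodic and ∫₀^π f(α+s)(sin s)^{m} ds = 0 for all α ∈ ℝ, then if m is even, f(θ+π) = f(θ) for all θ, and if m is odd, f(θ+π) = -f(θ) for all θ. -/
open Real Set

open intervalIntegral Complex

noncomputable def cker (m : ℕ) (n : ℤ) : ℂ :=
  ∫ s in (0:ℝ)..Real.pi, (Real.sin s : ℂ)^m * Complex.exp ((n:ℂ) * Complex.I * s)

lemma sinpow_deriv (j : ℕ) (x : ℝ) :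
    HasDerivAt (fun s : ℝ => ((Real.sin s : ℂ))^j)
      ((j:ℂ) * ((Real.sin x:ℂ))^(j-1) * (Real.cos x:ℂ)) x := by
  have h := ((Complex.hasDerivAt_sin (x:ℂ)).pow j).comp_ofReal
  simpa [← Complex.ofReal_sin, ← Complex.ofReal_cos] using h

lemma expInt (j : ℤ) (hj : Odd j) :
    ∫ s in (0:ℝ)..Real.pi, Complex.exp ((j:ℂ) * Complex.I * s) = -2/((j:ℂ)*Complex.I) := by
  have hjz : j ≠ 0 := by rintro rfl; simp at hj
  have hj0 : (j:ℂ) * Complex.I ≠ 0 := by simp [Complex.I_ne_zero, hjz]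
  rw [integral_exp_mul_complex hj0]
  have h1 : ((j:ℂ) * Complex.I * (Real.pi:ℂ)) = (j:ℤ) * ((Real.pi:ℂ) * Complex.I) := by ring
  rw [h1, Complex.exp_int_mul, Complex.exp_pi_mul_I, hj.neg_one_zpow]
  simp; ring

lemma cker_zero (n : ℤ) (hn : Odd n) : cker 0 n = -2/((n:ℂ)*Complex.I) := by
  simpa [cker] using expInt n hn

lemma cker_one (n : ℤ) (hn : Even n) : cker 1 n = 2/(1 - (n:ℂ)^2) := by
  have h1 : Odd (n + 1) := hn.add_one
  have h2 : Odd (n - 1) := by simpa using hn.sub_odd odd_one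
  have key : ∀ s : ℝ, (Real.sin s : ℂ)^1 * Complex.exp ((n:ℂ) * Complex.I * s)
      = (Complex.exp (((n+1:ℤ):ℂ) * Complex.I * s) - Complex.exp (((n-1:ℤ):ℂ) * Complex.I * s)) / (2*Complex.I) := by
    intro s
    rw [pow_one, Complex.ofReal_sin, Complex.sin]
    push_cast
    rw [show ((n:ℂ)+1) * Complex.I * s = (n:ℂ)*Complex.I*s + s*Complex.I by ring,
        show ((n:ℂ)-1) * Complex.I * s = (n:ℂ)*Complex.I*s + (-(s:ℂ))*Complex.I by ring,
        Complex.exp_add, Complex.exp_add]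
    rw [eq_div_iff (by simp [Complex.I_ne_zero] : (2*Complex.I) ≠ 0)]
    linear_combination (Complex.exp (-(s:ℂ)*Complex.I) - Complex.exp ((s:ℂ)*Complex.I)) * Complex.exp ((n:ℂ)*Complex.I*s) * Complex.I_sq
  rw [cker]
  simp_rw [key]
  rw [intervalIntegral.integral_div, intervalIntegral.integral_sub ((Continuous.intervalIntegrable (by fun_prop)) _ _) ((Continuous.intervalIntegrable (by fun_prop)) _ _),
      expInt _ h1, expInt _ h2]
  have hI : Complex.I ≠ 0 := Complex.I_ne_zero
  have ha : ((n:ℂ)+1) ≠ 0 := by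
    intro hc
    have : (n:ℂ) = -1 := by linear_combination hc
    have : n = -1 := by exact_mod_cast this
    subst this; simp at hn
  have hb : ((n:ℂ)-1) ≠ 0 := by
    intro hc
    have : (n:ℂ) = 1 := by linear_combination hc
    have : n = 1 := by exact_mod_cast this
    subst this; simp at hn
  have hq : (1 - (n:ℂ)^2) ≠ 0 := by
    intro hc
    have : ((n:ℂ)-1)*((n:ℂ)+1) = 0 := by linear_combination -hc
    rcases mul_eq_zero.1 this with h|h
    · exact hb h
    · exact ha h
  push_cast
  field_simp
  linear_combination (2 - 2*(n:ℂ)^2) * Complex.I_sq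

lemma cker_rec (k : ℕ) (n : ℤ) (hn : n ≠ 0) :
    (((k:ℂ)+2)^2 - (n:ℂ)^2) * cker (k+2) n = ((k:ℂ)+2)*((k:ℂ)+1) * cker k n := by
  set c : ℂ := (n:ℂ) * Complex.I with hc_def
  have hc : c ≠ 0 := by
    simp only [hc_def, mul_ne_zero_iff]
    exact ⟨by exact_mod_cast hn, Complex.I_ne_zero⟩
  set u : ℝ → ℂ := fun s => ((Real.sin s : ℂ))^(k+2) with hu_def
  set U : ℝ → ℂ := fun s => ((k+2:ℕ):ℂ) * (((Real.sin s:ℂ))^(k+1) * (Real.cos s:ℂ)) with hU_def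
  set v : ℝ → ℂ := fun s => Complex.exp (c*s) / c with hv_def
  set V : ℝ → ℂ := fun s => v s / c with hV_def
  set U' : ℝ → ℂ := fun s => ((k+2:ℕ):ℂ) *
      (((k+1:ℕ):ℂ) * ((Real.sin s:ℂ))^k * (Real.cos s:ℂ) * (Real.cos s:ℂ)
        + ((Real.sin s:ℂ))^(k+1) * -((Real.sin s:ℂ))) with hU'_def
  have hcosC : ∀ x : ℝ, HasDerivAt (fun s : ℝ => ((Real.cos s : ℂ))) (-(Real.sin x : ℂ)) x := by
    intro x
    have := (Complex.hasDerivAt_cos (x:ℂ)).comp_ofReal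
    simpa [← Complex.ofReal_sin, ← Complex.ofReal_cos] using this
  have Dv : ∀ x : ℝ, HasDerivAt v (Complex.exp (c*x)) x := by
    intro x
    rw [hv_def]
    rw [← mul_div_cancel_right₀ (Complex.exp (c * x)) hc]
    apply ((Complex.hasDerivAt_exp _).comp x _).div_const c
    simpa only [mul_one, id_eq] using ((hasDerivAt_id (x : ℂ)).const_mul c).comp_ofReal
  have DV : ∀ x : ℝ, HasDerivAt V (v x) x := fun x => (Dv x).div_const c
  have Du : ∀ x : ℝ, HasDerivAt u (U x) x := by
    intro x
    have := sinpow_deriv (k+2) x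
    rw [show k + 2 - 1 = k + 1 from rfl, mul_assoc] at this
    exact this
  have DU : ∀ x : ℝ, HasDerivAt U (U' x) x := by
    intro x
    exact ((sinpow_deriv (k+1) x).mul (hcosC x)).const_mul (((k+2:ℕ)):ℂ)
  have csin : Continuous (fun s : ℝ => ((Real.sin s:ℂ))) := Complex.continuous_ofReal.comp Real.continuous_sin
  have ccos : Continuous (fun s : ℝ => ((Real.cos s:ℂ))) := Complex.continuous_ofReal.comp Real.continuous_cos
  have cexpc : Continuous (fun s : ℝ => Complex.exp (c*s)) :=
    Complex.continuous_exp.comp (continuous_const.mul Complex.continuous_ofReal)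
  have cU : Continuous U := continuous_const.mul ((csin.pow _).mul ccos)
  have cv : Continuous v := cexpc.div_const c
  have cV : Continuous V := cv.div_const c
  have cU' : Continuous U' := by
    apply continuous_const.mul
    exact ((((continuous_const.mul (csin.pow _)).mul ccos).mul ccos).add ((csin.pow _).mul csin.neg))
  -- first integration by parts
  have parts1 : cker (k+2) n = -∫ s in (0:ℝ)..Real.pi, U s * v s := by
    have h := intervalIntegral.integral_mul_deriv_eq_deriv_mul
      (u := u) (v := v) (u' := U) (v' := fun s => Complex.exp (c*s))
      (a := 0) (b := Real.pi)
      (fun x _ => Du x) (fun x _ => Dv x)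
      (cU.intervalIntegrable _ _) (cexpc.intervalIntegrable _ _)
    have e1 : cker (k+2) n = ∫ s in (0:ℝ)..Real.pi, u s * Complex.exp (c*s) := rfl
    rw [e1, h]
    simp [hu_def, Real.sin_pi]
  -- second integration by parts
  have parts2 : (∫ s in (0:ℝ)..Real.pi, U s * v s)
      = -∫ s in (0:ℝ)..Real.pi, U' s * V s := by
    have h := intervalIntegral.integral_mul_deriv_eq_deriv_mul
      (u := U) (v := V) (u' := U') (v' := v)
      (a := 0) (b := Real.pi)
      (fun x _ => DU x) (fun x _ => DV x)
      (cU'.intervalIntegrable _ _) (cv.intervalIntegrable _ _)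
    rw [h]
    simp [hU_def, Real.sin_pi]
  -- pointwise identity
  have hpt : ∀ s : ℝ, c^2 * (U' s * V s)
      = (((k:ℂ)+2)*((k:ℂ)+1)) * (((Real.sin s:ℂ))^k * Complex.exp (c*s))
        - (((k:ℂ)+2)^2) * (((Real.sin s:ℂ))^(k+2) * Complex.exp (c*s)) := by
    intro s
    have hcs : ((Real.cos s:ℂ))^2 = 1 - ((Real.sin s:ℂ))^2 := by
      have h2 : ((Real.sin s:ℂ))^2 + ((Real.cos s:ℂ))^2 = 1 := by
        exact_mod_cast congrArg (fun t : ℝ => (t:ℂ)) (Real.sin_sq_add_cos_sq s)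
      linear_combination h2
    simp only [hU'_def, hV_def, hv_def]
    push_cast at hcs ⊢
    field_simp
    linear_combination (((k:ℂ)+2)*((k:ℂ)+1) * Complex.sin (s:ℂ)^k) * hcs
  -- combine
  have comb : c^2 * cker (k+2) n
      = (((k:ℂ)+2)*((k:ℂ)+1)) * cker k n - (((k:ℂ)+2)^2) * cker (k+2) n := by
    conv_lhs => rw [parts1, parts2, neg_neg, ← intervalIntegral.integral_const_mul]
    rw [intervalIntegral.integral_congr (g :=
      fun s => (((k:ℂ)+2)*((k:ℂ)+1)) * (((Real.sin s:ℂ))^k * Complex.exp (c*s))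
        - (((k:ℂ)+2)^2) * (((Real.sin s:ℂ))^(k+2) * Complex.exp (c*s))) (fun s _ => hpt s)]
    rw [intervalIntegral.integral_sub, intervalIntegral.integral_const_mul,
        intervalIntegral.integral_const_mul]
    · simp only [cker, ← hc_def]
    · exact (Continuous.intervalIntegrable (continuous_const.mul ((csin.pow _).mul cexpc)) _ _)
    · exact (Continuous.intervalIntegrable (continuous_const.mul ((csin.pow _).mul cexpc)) _ _)
  have hc2 : c^2 = -((n:ℂ))^2 := by
    rw [hc_def, mul_pow, Complex.I_sq]
    ring
  rw [hc2] at comb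
  linear_combination comb

lemma cker_pos_real (m : ℕ) : cker m 0 = ((∫ s in (0:ℝ)..Real.pi, (Real.sin s)^m : ℝ) : ℂ) := by
  simp only [cker, Int.cast_zero, zero_mul, Complex.exp_zero, mul_one]
  rw [← intervalIntegral.integral_ofReal]
  norm_num

lemma cker_zero_ne (m : ℕ) : cker m 0 ≠ 0 := by
  rw [cker_pos_real]
  have hpos : (0:ℝ) < ∫ s in (0:ℝ)..Real.pi, (Real.sin s)^m := by
    apply intervalIntegral.intervalIntegral_pos_of_pos_on
    · exact (Real.continuous_sin.pow m).intervalIntegrable _ _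
    · intro x hx
      exact pow_pos (Real.sin_pos_of_pos_of_lt_pi hx.1 hx.2) m
    · exact Real.pi_pos
  exact_mod_cast hpos.ne'

lemma cker_ne_zero : ∀ (m : ℕ) (n : ℤ), Odd (n + m) → cker m n ≠ 0
  | 0, n, h => by
    have hn : Odd n := by simpa using h
    rw [cker_zero n hn]
    have : (n:ℂ) ≠ 0 := by
      exact_mod_cast (by rintro rfl; simp at hn : n ≠ 0)
    simp [this, Complex.I_ne_zero]
  | 1, n, h => by
    have hn : Even n := by
      rcases Int.even_or_odd n with he | ho
      · exact he
      · exfalso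
        have : Even (n+1) := ho.add_one
        rw [show ((1:ℕ):ℤ) = 1 by norm_num] at h
        exact (Int.not_odd_iff_even.2 this) h
    rw [cker_one n hn]
    have h1 : ((n:ℂ)+1) ≠ 0 := by
      intro hc
      have : n = -1 := by exact_mod_cast (by linear_combination hc : (n:ℂ) = -1)
      subst this; simp at hn
    have h2 : ((n:ℂ)-1) ≠ 0 := by
      intro hc
      have : n = 1 := by exact_mod_cast (by linear_combination hc : (n:ℂ) = 1)
      subst this; simp at hn
    have hq : (1 - (n:ℂ)^2) ≠ 0 := by
      intro hc
      have : ((n:ℂ)-1)*((n:ℂ)+1) = 0 := by linear_combination -hc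
      rcases mul_eq_zero.1 this with hx|hx
      · exact h2 hx
      · exact h1 hx
    simp [hq]
  | (k+2), n, h => by
    rcases eq_or_ne n 0 with rfl | hn
    · exact cker_zero_ne (k+2)
    · have hk : Odd (n + k) := by
        have : (n + ((k:ℕ)+2:ℕ):ℤ) = (n + k) + 2 := by push_cast; ring
        rw [this] at h
        rcases h with ⟨t, ht⟩
        exact ⟨t - 1, by linarith⟩
      have ih := cker_ne_zero k n hk
      have hrec := cker_rec k n hn
      intro hzero
      rw [hzero, mul_zero] at hrec
      have hcoef : ((k:ℂ)+2)*((k:ℂ)+1) ≠ 0 := by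
        have : ((k:ℂ)+2) ≠ 0 := by
          exact_mod_cast (Nat.cast_ne_zero (R:=ℂ)).2 (Nat.succ_ne_zero (k+1))
        have h2 : ((k:ℂ)+1) ≠ 0 := by
          exact_mod_cast (Nat.cast_ne_zero (R:=ℂ)).2 (Nat.succ_ne_zero k)
        exact mul_ne_zero this h2
      exact ih (by
        rcases mul_eq_zero.1 hrec.symm with hx | hx
        · exact absurd hx hcoef
        · exact hx)

noncomputable def fhat (f : ℝ → ℂ) (n : ℤ) : ℂ :=
  ∫ t in (0:ℝ)..(2*Real.pi), f t * Complex.exp (-(n:ℂ) * Complex.I * t)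

lemma step_a (f : ℝ → ℂ) (hf : Continuous f) (hper : Function.Periodic f (2*Real.pi))
    (m : ℕ) (n : ℤ)
    (h : ∀ α : ℝ, ∫ s in (0:ℝ)..Real.pi, f (α + s) * (Real.sin s : ℂ) ^ m = 0) :
    cker m n * fhat f n = 0 := by
  have hπ := Real.pi_pos
  set G : ℝ → ℝ → ℂ := fun α s => f (α + s) * (Real.sin s:ℂ)^m * Complex.exp (-(n:ℂ)*Complex.I*α)
    with hG_def
  have hGcont : Continuous (Function.uncurry G) := by
    apply Continuous.mul
    · apply Continuous.mul
      · exact hf.comp (by fun_prop)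
      · fun_prop
    · fun_prop
  -- the double integral is 0
  have hzero : (∫ α in (0:ℝ)..(2*Real.pi), ∫ s in (0:ℝ)..Real.pi, G α s) = 0 := by
    have : ∀ α : ℝ, (∫ s in (0:ℝ)..Real.pi, G α s) = 0 := by
      intro α
      have := h α
      rw [hG_def]
      simp only
      rw [intervalIntegral.integral_mul_const]
      rw [this, zero_mul]
    simp only [this, intervalIntegral.integral_zero]
  -- swap
  have hswap : (∫ α in (0:ℝ)..(2*Real.pi), ∫ s in (0:ℝ)..Real.pi, G α s)
      = ∫ s in (0:ℝ)..Real.pi, ∫ α in (0:ℝ)..(2*Real.pi), G α s := by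
    rw [intervalIntegral.integral_of_le (by linarith), intervalIntegral.integral_of_le (by linarith)]
    simp_rw [intervalIntegral.integral_of_le (le_of_lt hπ),
      intervalIntegral.integral_of_le (by linarith : (0:ℝ) ≤ 2*Real.pi)]
    rw [← MeasureTheory.integral_integral_swap]
    rw [MeasureTheory.Measure.prod_restrict]
    apply MeasureTheory.IntegrableOn.mono_set
      ((hGcont.comp continuous_swap).continuousOn.integrableOn_compact
        (isCompact_Icc.prod isCompact_Icc)
        (μ := MeasureTheory.volume.prod MeasureTheory.volume))
    exact Set.prod_mono Set.Ioc_subset_Icc_self Set.Ioc_subset_Icc_self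
  -- compute the inner integral
  have hinner : ∀ s : ℝ, (∫ α in (0:ℝ)..(2*Real.pi), G α s)
      = (Real.sin s:ℂ)^m * Complex.exp ((n:ℂ)*Complex.I*s) * fhat f n := by
    intro s
    have hptw : ∀ α : ℝ, G α s
        = (Real.sin s:ℂ)^m * Complex.exp ((n:ℂ)*Complex.I*s)
          * (f (α+s) * Complex.exp (-(n:ℂ)*Complex.I*(α+s))) := by
      intro α
      rw [hG_def]
      simp only
      have hexp : Complex.exp ((n:ℂ)*Complex.I*s) * Complex.exp (-(n:ℂ)*Complex.I*((α:ℂ)+(s:ℂ)))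
          = Complex.exp (-(n:ℂ)*Complex.I*α) := by
        rw [← Complex.exp_add]; congr 1; ring
      calc f (α + s) * (Real.sin s:ℂ)^m * Complex.exp (-(n:ℂ)*Complex.I*α)
          = f (α + s) * (Real.sin s:ℂ)^m *
            (Complex.exp ((n:ℂ)*Complex.I*s) * Complex.exp (-(n:ℂ)*Complex.I*((α:ℂ)+(s:ℂ)))) := by
            rw [hexp]
        _ = _ := by ring
    simp_rw [hptw]
    rw [intervalIntegral.integral_const_mul]
    congr 1
    have hshift : (∫ α in (0:ℝ)..(2*Real.pi), f (α+s) * Complex.exp (-(n:ℂ)*Complex.I*((α:ℂ)+(s:ℂ))))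
        = ∫ u in s..(s+2*Real.pi), f u * Complex.exp (-(n:ℂ)*Complex.I*u) := by
      have := intervalIntegral.integral_comp_add_right (a := (0:ℝ)) (b := 2*Real.pi)
        (fun u : ℝ => f u * Complex.exp (-(n:ℂ)*Complex.I*u)) s
      rw [zero_add, add_comm (2*Real.pi) s] at this
      rw [← this]
      congr 1
      funext α
      push_cast
      ring_nf
    have hperiodic : Function.Periodic (fun u : ℝ => f u * Complex.exp (-(n:ℂ)*Complex.I*u)) (2*Real.pi) := by
      intro u
      simp only
      rw [hper u]
      congr 1
      rw [show (-(n:ℂ)*Complex.I*((u:ℝ)+2*Real.pi:ℝ))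
            = -(n:ℂ)*Complex.I*u + (((-n : ℤ)):ℂ) * (2*(Real.pi:ℂ)*Complex.I) by push_cast; ring,
        Complex.exp_add, Complex.exp_int_mul_two_pi_mul_I]
      simp
    calc (∫ α in (0:ℝ)..(2*Real.pi), f (α+s) * Complex.exp (-(n:ℂ)*Complex.I*((α:ℂ)+(s:ℂ))))
        = ∫ u in s..(s+2*Real.pi), f u * Complex.exp (-(n:ℂ)*Complex.I*u) := hshift
      _ = ∫ u in (0:ℝ)..(0+2*Real.pi), f u * Complex.exp (-(n:ℂ)*Complex.I*u) :=
          hperiodic.intervalIntegral_add_eq s 0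
      _ = fhat f n := by rw [zero_add]; rfl
  rw [hswap] at hzero
  rw [← hzero]
  simp_rw [hinner]
  rw [cker]
  rw [← intervalIntegral.integral_mul_const]

lemma vanish_of_fhat (g : ℝ → ℂ) (hg : Continuous g) (hgper : Function.Periodic g (2*Real.pi))
    (hzero : ∀ n : ℤ, fhat g n = 0) : ∀ θ : ℝ, g θ = 0 := by
  haveI : Fact (0 < 2*Real.pi) := ⟨by positivity⟩
  set G : C(AddCircle (2*Real.pi), ℂ) :=
    ⟨hgper.lift, continuous_coinduced_dom.mpr hg⟩ with hG_def
  have hGcoe : ∀ x : ℝ, G (x : AddCircle (2*Real.pi)) = g x := fun x => hgper.lift_coe x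
  have hcoeff : ∀ n : ℤ, fourierCoeff (⇑G) n = 0 := by
    intro n
    rw [fourierCoeff_eq_intervalIntegral (⇑G) n 0]
    have : (∫ x in (0:ℝ)..(0 + 2*Real.pi), (fourier (-n) (x : AddCircle (2*Real.pi))) • G (x : AddCircle (2*Real.pi)))
        = fhat g n := by
      rw [zero_add, fhat]
      congr 1
      funext x
      rw [hGcoe x, fourier_coe_apply]
      rw [smul_eq_mul, mul_comm]
      congr 2
      have hπ : (Real.pi:ℂ) ≠ 0 := by
        exact_mod_cast Real.pi_ne_zero
      push_cast
      field_simp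
    rw [this, hzero n, smul_zero]
  have hsummable : Summable (fourierCoeff (⇑G)) := by
    have : fourierCoeff (⇑G) = fun _ => 0 := funext hcoeff
    rw [this]; exact summable_zero
  have hsum := hasSum_fourier_series_of_summable hsummable
  have hsum0 : HasSum (fun i : ℤ => fourierCoeff (⇑G) i • fourier (T := 2*Real.pi) i) 0 := by
    have : (fun i : ℤ => fourierCoeff (⇑G) i • fourier (T := 2*Real.pi) i) = fun _ => 0 := by
      funext i; rw [hcoeff i, zero_smul]
    rw [this]; exact hasSum_zero
  have hG0 : G = 0 := hsum.unique hsum0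
  intro θ
  have := hGcoe θ
  rw [hG0] at this
  simpa using this.symm

/-- Parity conclusion: if `f` is continuous, `2π`-periodic and
`∫₀^π f(α+s)(sin s)^m ds = 0` for all `α`, then `f` is invariant under the
antipodal map `θ ↦ θ + π` when `m` is even, and anti-invariant when `m` is odd. -/
theorem stmt_8 (f : ℝ → ℂ) (hf : Continuous f)
    (hper : ∀ θ : ℝ, f (θ + 2 * Real.pi) = f θ) (m : ℕ)
    (h : ∀ α : ℝ, ∫ s in (0:ℝ)..Real.pi, f (α + s) * (Real.sin s : ℂ) ^ m = 0) :
    (Even m → ∀ θ : ℝ, f (θ + Real.pi) = f θ) ∧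
    (Odd m → ∀ θ : ℝ, f (θ + Real.pi) = -f θ) := by
  have hperiodic : Function.Periodic f (2*Real.pi) := hper
  -- fhat f n = 0 whenever n + m is odd
  have hfhat : ∀ n : ℤ, Odd (n + m) → fhat f n = 0 := by
    intro n hodd
    have h1 := step_a f hf hperiodic m n h
    have h2 := cker_ne_zero m n hodd
    rcases mul_eq_zero.1 h1 with hx | hx
    · exact absurd hx h2
    · exact hx
  -- the antipodal defect function
  set g : ℝ → ℂ := fun θ => f (θ + Real.pi) - (-1:ℂ)^m * f θ with hg_def
  have hgc : Continuous g := (hf.comp (by fun_prop)).sub (continuous_const.mul hf)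
  have hgper : Function.Periodic g (2*Real.pi) := by
    intro θ
    simp only [hg_def]
    rw [show θ + 2*Real.pi + Real.pi = (θ + Real.pi) + 2*Real.pi by ring, hper (θ + Real.pi), hper θ]
  -- fhat g n = 0 for all n
  have hghat : ∀ n : ℤ, fhat g n = 0 := by
    intro n
    have hFper : Function.Periodic (fun u : ℝ => f u * Complex.exp (-(n:ℂ)*Complex.I*u)) (2*Real.pi) := by
      intro u
      simp only
      rw [hper u]
      congr 1
      rw [show (-(n:ℂ)*Complex.I*((u:ℝ)+2*Real.pi:ℝ))
            = -(n:ℂ)*Complex.I*u + (((-n : ℤ)):ℂ) * (2*(Real.pi:ℂ)*Complex.I) by push_cast; ring,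
        Complex.exp_add, Complex.exp_int_mul_two_pi_mul_I]
      simp
    have hshift : (∫ t in (0:ℝ)..(2*Real.pi), f (t + Real.pi) * Complex.exp (-(n:ℂ)*Complex.I*t))
        = (-1:ℂ)^n * fhat f n := by
      have hptw : ∀ t : ℝ, f (t + Real.pi) * Complex.exp (-(n:ℂ)*Complex.I*t)
          = Complex.exp ((n:ℂ)*Complex.I*Real.pi)
            * (f (t + Real.pi) * Complex.exp (-(n:ℂ)*Complex.I*((t:ℝ) + Real.pi : ℝ))) := by
        intro t
        have hexp : Complex.exp ((n:ℂ)*Complex.I*Real.pi)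
            * Complex.exp (-(n:ℂ)*Complex.I*((t:ℝ) + Real.pi : ℝ))
            = Complex.exp (-(n:ℂ)*Complex.I*t) := by
          rw [← Complex.exp_add]; congr 1; push_cast; ring
        rw [← hexp]; ring
      simp_rw [hptw]
      rw [intervalIntegral.integral_const_mul]
      have hcv := intervalIntegral.integral_comp_add_right (a := (0:ℝ)) (b := 2*Real.pi)
        (fun u : ℝ => f u * Complex.exp (-(n:ℂ)*Complex.I*u)) Real.pi
      rw [zero_add, add_comm (2*Real.pi) Real.pi] at hcv
      have : (∫ t in (0:ℝ)..(2*Real.pi),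
          f (t + Real.pi) * Complex.exp (-(n:ℂ)*Complex.I*((t:ℝ) + Real.pi : ℝ)))
          = ∫ u in Real.pi..(Real.pi + 2*Real.pi), f u * Complex.exp (-(n:ℂ)*Complex.I*u) := by
        rw [← hcv]
      rw [this, hFper.intervalIntegral_add_eq Real.pi 0, zero_add]
      have hexppi : Complex.exp ((n:ℂ)*Complex.I*Real.pi) = (-1:ℂ)^n := by
        rw [show ((n:ℂ)*Complex.I*(Real.pi:ℂ)) = (n:ℤ) * ((Real.pi:ℂ) * Complex.I) by push_cast; ring,
          Complex.exp_int_mul, Complex.exp_pi_mul_I]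
      rw [hexppi]
      rfl
    have hsub : fhat g n = (-1:ℂ)^n * fhat f n - (-1:ℂ)^m * fhat f n := by
      rw [fhat, hg_def]
      simp only [sub_mul]
      rw [intervalIntegral.integral_sub]
      · rw [hshift]
        congr 1
        calc (∫ t in (0:ℝ)..(2*Real.pi), (-1:ℂ)^m * f t * Complex.exp (-(n:ℂ)*Complex.I*t))
            = ∫ t in (0:ℝ)..(2*Real.pi), (-1:ℂ)^m * (f t * Complex.exp (-(n:ℂ)*Complex.I*t)) := by
              congr 1; funext t; ring
          _ = (-1:ℂ)^m * fhat f n := by rw [intervalIntegral.integral_const_mul]; rfl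
      · exact ((hf.comp (by fun_prop : Continuous (fun t : ℝ => t + Real.pi))).mul (by fun_prop)).intervalIntegrable _ _
      · exact ((continuous_const.mul hf).mul (by fun_prop)).intervalIntegrable _ _
    rcases Int.even_or_odd (n + m) with hpar | hpar
    · -- same parity: the factor vanishes
      have : (-1:ℂ)^n = (-1:ℂ)^m := by
        rcases Int.even_or_odd n with hn | hn
        · have hm : Even m := by
            rcases Nat.even_or_odd m with hm | hm
            · exact hm
            · exfalso
              have : Odd (n + m) := hn.add_odd (by exact_mod_cast hm)
              exact (Int.not_odd_iff_even.2 hpar) this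
          rw [hn.neg_one_zpow, hm.neg_one_pow]
        · have hm : Odd m := by
            rcases Nat.even_or_odd m with hm | hm
            · exfalso
              have : Odd (n + m) := by
                rw [add_comm]
                exact (by exact_mod_cast hm : Even (m:ℤ)).add_odd hn
              exact (Int.not_odd_iff_even.2 hpar) this
            · exact hm
          rw [hn.neg_one_zpow, hm.neg_one_pow]
      rw [hsub, this, sub_self]
    · rw [hsub, hfhat n hpar, mul_zero, mul_zero, sub_zero]
  have hgzero := vanish_of_fhat g hgc hgper hghat
  have key : ∀ θ : ℝ, f (θ + Real.pi) = (-1:ℂ)^m * f θ := by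
    intro θ
    have := hgzero θ
    simp only [hg_def] at this
    linear_combination this
  constructor
  · intro hm θ
    rw [key θ, hm.neg_one_pow, one_mul]
  · intro hm θ
    rw [key θ, hm.neg_one_pow, neg_one_mul]
end

section
/- Let l ≥ 1, n ≥ 2, and let ψ : {1,…,n-1}^l → (ℝ^{n-1} → ℂ) be smooth components of a symmetric tensor that is a symmetrized derivative: ψ_α = (1/l) ∑_{j=1}^l ∂_{α_j} φ_{α̃_j} for smooth symmetric (l-1)-tensor components φ. Then for any α, β ∈ {1,…,n-1}^l, ∑_e sgn(e) ∂_{e(α,β)^{(2)}} ψ_{e(α,β)^{(1)}} = 0, where the sum is over all exchanges e (swapping any subset of matched positions between α and β), sgn(e) = (-1)^{#swaps}, and ∂_γ = ∂_{γ_1}⋯∂_{γ_l}. -/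
open Set

/-- Partial derivative in the `i`-th coordinate direction on `ℝᵏ = (Fin k → ℝ)`. -/
noncomputable def pd {k : ℕ} (i : Fin k) (f : (Fin k → ℝ) → ℂ) : (Fin k → ℝ) → ℂ :=
  fun z => fderiv ℝ f z (Pi.single i 1)

/-- Iterated partial derivative `∂_γ = ∂_{γ_1} ⋯ ∂_{γ_r}`. -/
noncomputable def pds {k r : ℕ} (γ : Fin r → Fin k) (f : (Fin k → ℝ) → ℂ) :
    (Fin k → ℝ) → ℂ :=
  (List.ofFn γ).foldr (fun i g => pd i g) f

lemma pd_contDiff {k : ℕ} {f : (Fin k → ℝ) → ℂ} (hf : ContDiff ℝ (⊤ : ℕ∞) f) (i : Fin k) :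
    ContDiff ℝ (⊤ : ℕ∞) (pd i f) := by
  have h := (hf.fderiv_right (m := (⊤ : ℕ∞)) le_rfl)
  exact h.clm_apply contDiff_const

lemma pd_comm {k : ℕ} {f : (Fin k → ℝ) → ℂ} (hf : ContDiff ℝ (⊤ : ℕ∞) f) (i j : Fin k) :
    pd i (pd j f) = pd j (pd i f) := by
  funext z
  have hsymm : IsSymmSndFDerivAt ℝ f z :=
    (hf.contDiffAt).isSymmSndFDerivAt (by rw [minSmoothness_of_isRCLikeNormedField]; exact WithTop.coe_le_coe.mpr le_top)
  have hd : ∀ (w : Fin k → ℝ) (x : Fin k → ℝ),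
      fderiv ℝ (fun y => fderiv ℝ f y w) x = (fderiv ℝ (fderiv ℝ f) x).flip w := by
    intro w x
    have h1 : DifferentiableAt ℝ (fderiv ℝ f) x :=
      ((hf.fderiv_right (m := (⊤ : ℕ∞)) le_rfl).differentiable (by simp)) x
    rw [fderiv_clm_apply h1 (differentiableAt_const w)]
    ext v
    simp
  show fderiv ℝ (fun y => fderiv ℝ f y (Pi.single j 1)) z (Pi.single i 1)
     = fderiv ℝ (fun y => fderiv ℝ f y (Pi.single i 1)) z (Pi.single j 1)
  rw [hd, hd]
  simpa using hsymm (Pi.single i 1) (Pi.single j 1)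

noncomputable def pdsL {k : ℕ} (L : List (Fin k)) (f : (Fin k → ℝ) → ℂ) : (Fin k → ℝ) → ℂ :=
  L.foldr (fun i g => pd i g) f

lemma pdsL_contDiff {k : ℕ} {f : (Fin k → ℝ) → ℂ} (hf : ContDiff ℝ (⊤ : ℕ∞) f) (L : List (Fin k)) :
    ContDiff ℝ (⊤ : ℕ∞) (pdsL L f) := by
  induction L with
  | nil => exact hf
  | cons a L ih => exact pd_contDiff ih a

lemma pdsL_perm {k : ℕ} {L L' : List (Fin k)} (h : L.Perm L')
    {f : (Fin k → ℝ) → ℂ} (hf : ContDiff ℝ (⊤ : ℕ∞) f) : pdsL L f = pdsL L' f := by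
  induction h with
  | nil => rfl
  | cons a h ih => simp only [pdsL, List.foldr_cons]; rw [show (List.foldr (fun i g => pd i g) f _) = pdsL _ f from rfl, show (List.foldr (fun i g => pd i g) f _) = pdsL _ f from rfl, ih]
  | swap a b L => exact pd_comm (pdsL_contDiff hf L) b a
  | trans h1 h2 ih1 ih2 => rw [ih1, ih2]

lemma pd_mul_sum {k : ℕ} {ι : Type*} (s : Finset ι) (c : ℂ) (F : ι → (Fin k → ℝ) → ℂ)
    (hF : ∀ j ∈ s, ContDiff ℝ (⊤ : ℕ∞) (F j)) (i : Fin k) :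
    pd i (fun z => c * ∑ j ∈ s, F j z) = fun z => c * ∑ j ∈ s, pd i (F j) z := by
  funext z
  unfold pd
  rw [show (fun z => c * ∑ j ∈ s, F j z) = fun z => c • ∑ j ∈ s, F j z by simp [smul_eq_mul]]
  rw [fderiv_fun_const_smul (by exact DifferentiableAt.fun_sum fun j hj =>
      ((hF j hj).differentiable (by simp) z)), fderiv_fun_sum (fun j hj => ((hF j hj).differentiable (by simp) z))]
  simp [smul_eq_mul]

lemma pdsL_mul_sum {k : ℕ} {ι : Type*} (s : Finset ι) (c : ℂ) (F : ι → (Fin k → ℝ) → ℂ)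
    (hF : ∀ j ∈ s, ContDiff ℝ (⊤ : ℕ∞) (F j)) (L : List (Fin k)) :
    pdsL L (fun z => c * ∑ j ∈ s, F j z) = fun z => c * ∑ j ∈ s, pdsL L (F j) z := by
  induction L with
  | nil => rfl
  | cons a L ih =>
    show pd a (pdsL L _) = _
    rw [ih, pd_mul_sum s c _ (fun j hj => pdsL_contDiff (hF j hj) L) a]
    rfl

lemma word_perm {r k : ℕ} (γ : Fin r → Fin k) (j : Fin r) (a : Fin k) :
    (List.ofFn γ ++ [a]).Perm (List.ofFn (Function.update γ j a) ++ [γ j]) := by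
  rw [← Multiset.coe_eq_coe]
  have h1 : ((List.ofFn γ ++ [a] : List (Fin k)) : Multiset (Fin k))
      = Multiset.map γ (Finset.univ.val) + {a} := by
    simp only [List.ofFn_eq_map, Fin.univ_def, ← Multiset.map_coe, ← Multiset.coe_add,
      Multiset.coe_singleton]
  have h2 : ((List.ofFn (Function.update γ j a) ++ [γ j] : List (Fin k)) : Multiset (Fin k))
      = Multiset.map (Function.update γ j a) (Finset.univ.val) + {γ j} := by
    simp only [List.ofFn_eq_map, Fin.univ_def, ← Multiset.map_coe, ← Multiset.coe_add,
      Multiset.coe_singleton]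
  rw [h1, h2]
  have hu : (Finset.univ : Finset (Fin r)).val = j ::ₘ (Finset.univ.erase j).val := by
    rw [← Finset.insert_val_of_notMem (by simp), Finset.insert_erase (Finset.mem_univ j)]
  rw [hu, Multiset.map_cons, Multiset.map_cons]
  have hmap : Multiset.map (Function.update γ j a) (Finset.univ.erase j).val
      = Multiset.map γ (Finset.univ.erase j).val := by
    apply Multiset.map_congr rfl
    intro x hx
    rw [Function.update_of_ne (Finset.ne_of_mem_erase (Finset.mem_val.mp hx))]
  rw [hmap, Function.update_self]
  have : ∀ (b c : Fin k) (M : Multiset (Fin k)), (b ::ₘ M) + {c} = (c ::ₘ M) + {b} := by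
    intro b c M
    simp only [← Multiset.singleton_add]
    abel
  exact this (γ j) a _

lemma pds_eq_pdsL {k r : ℕ} (γ : Fin r → Fin k) (f : (Fin k → ℝ) → ℂ) :
    pds γ f = pdsL (List.ofFn γ) f := rfl

lemma pds_swap {k r : ℕ} (γ : Fin r → Fin k) (j : Fin r) (a : Fin k)
    {f : (Fin k → ℝ) → ℂ} (hf : ContDiff ℝ (⊤ : ℕ∞) f) :
    pds γ (pd a f) = pds (Function.update γ j a) (pd (γ j) f) := by
  have e1 : pdsL (List.ofFn γ ++ [a]) f = pdsL (List.ofFn γ) (pd a f) := by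
    simp [pdsL, List.foldr_append]
  have e2 : pdsL (List.ofFn (Function.update γ j a) ++ [γ j]) f
      = pdsL (List.ofFn (Function.update γ j a)) (pd (γ j) f) := by
    simp [pdsL, List.foldr_append]
  rw [pds_eq_pdsL, pds_eq_pdsL, ← e1, ← e2]
  exact pdsL_perm (word_perm γ j a) hf

/-- The exchange identity (Section 4): if `ψ` is a smooth symmetrized derivative,
`ψ_α = (1/l) ∑_j ∂_{α_j} φ_{α̃_j}` (`l = m+1`), with `φ` smooth and symmetric, then for
any index tuples `α, β` the alternating sum over all exchanges `e` (determined by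
subsets `S` of positions, with sign `(-1)^{|S|}`) of `∂_{e(α,β)^{(2)}} ψ_{e(α,β)^{(1)}}`
vanishes identically. -/
theorem stmt_11 (n m : ℕ) (hn : 2 ≤ n)
    (ψ : (Fin (m + 1) → Fin (n - 1)) → (Fin (n - 1) → ℝ) → ℂ)
    (φ : (Fin m → Fin (n - 1)) → (Fin (n - 1) → ℝ) → ℂ)
    (hφ : ∀ γ, ContDiff ℝ (⊤ : ℕ∞) (φ γ))
    (hφsym : ∀ γ (σ : Equiv.Perm (Fin m)), φ (γ ∘ σ) = φ γ)
    (hψ : ∀ α (z : Fin (n - 1) → ℝ),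
      ψ α z = (1 / (m + 1 : ℂ)) *
        ∑ j : Fin (m + 1), pd (α j) (φ (α ∘ j.succAbove)) z) :
    ∀ (α β : Fin (m + 1) → Fin (n - 1)) (z : Fin (n - 1) → ℝ),
      ∑ S : Finset (Fin (m + 1)), ((-1 : ℂ) ^ S.card) *
        pds (fun j => if j ∈ S then α j else β j)
          (ψ (fun j => if j ∈ S then β j else α j)) z = 0 := by
  intro α β z
  set c : ℂ := 1 / (m + 1 : ℂ) with hc
  set γS : Finset (Fin (m + 1)) → Fin (m + 1) → Fin (n - 1) :=
    fun S j => if j ∈ S then α j else β j with hγS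
  set δS : Finset (Fin (m + 1)) → Fin (m + 1) → Fin (n - 1) :=
    fun S j => if j ∈ S then β j else α j with hδS
  have key : ∀ S : Finset (Fin (m + 1)),
      pds (γS S) (ψ (δS S)) z
        = c * ∑ j : Fin (m + 1),
            pds (γS S) (pd (δS S j) (φ (δS S ∘ j.succAbove))) z := by
    intro S
    have hψ' : ψ (δS S)
        = fun z' => c * ∑ j : Fin (m + 1), pd (δS S j) (φ (δS S ∘ j.succAbove)) z' :=
      funext (hψ (δS S))
    rw [hψ', pds_eq_pdsL,
      pdsL_mul_sum Finset.univ c _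
        (fun j _ => pd_contDiff (hφ (δS S ∘ j.succAbove)) (δS S j)) (List.ofFn (γS S))]
    rfl
  have hsum : ∑ S : Finset (Fin (m + 1)), ((-1 : ℂ) ^ S.card) * pds (γS S) (ψ (δS S)) z
      = ∑ j : Fin (m + 1), ∑ S : Finset (Fin (m + 1)),
          ((-1 : ℂ) ^ S.card) * c * pds (γS S) (pd (δS S j) (φ (δS S ∘ j.succAbove))) z := by
    rw [Finset.sum_comm]
    refine Finset.sum_congr rfl fun S _ => ?_
    rw [key S, Finset.mul_sum, Finset.mul_sum]
    exact Finset.sum_congr rfl fun j _ => by ring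
  rw [hsum]
  refine Finset.sum_eq_zero fun j _ => ?_
  -- cancellation for fixed j via the involution S ↦ S Δ {j}
  set T : Finset (Fin (m + 1)) → ℂ := fun S =>
    ((-1 : ℂ) ^ S.card) * c * pds (γS S) (pd (δS S j) (φ (δS S ∘ j.succAbove))) z with hT
  have hpair : ∀ S : Finset (Fin (m + 1)), j ∉ S → T S + T (insert j S) = 0 := by
    intro S hj
    have hcard : (insert j S).card = S.card + 1 := Finset.card_insert_of_notMem hj
    have hγ' : γS (insert j S) = Function.update (γS S) j (α j) := by
      funext k
      by_cases hk : k = j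
      · subst hk; simp [hγS, Function.update_self]
      · simp [hγS, Function.update_of_ne hk, Finset.mem_insert, hk]
    have hδj : δS S j = α j := by simp [hδS, hj]
    have hδ'j : δS (insert j S) j = β j := by simp [hδS]
    have hγj : γS S j = β j := by simp [hγS, hj]
    have hφarg : δS (insert j S) ∘ j.succAbove = δS S ∘ j.succAbove := by
      funext k
      have hne : j.succAbove k ≠ j := Fin.succAbove_ne j k
      simp [hδS, Function.comp, Finset.mem_insert, hne]
    have hswap : pds (γS S) (pd (δS S j) (φ (δS S ∘ j.succAbove)))
        = pds (γS (insert j S)) (pd (δS (insert j S) j) (φ (δS (insert j S) ∘ j.succAbove))) := by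
      rw [hδj, hγ', hδ'j, hφarg, ← hγj]
      exact pds_swap (γS S) j (α j) (hφ _)
    simp only [hT, hcard, hswap]
    ring
  have : ∀ S : Finset (Fin (m + 1)), S ∈ Finset.univ →
      T S + T (if j ∈ S then S.erase j else insert j S) = 0 := by
    intro S _
    by_cases hj : j ∈ S
    · simp only [hj, if_true]
      have := hpair (S.erase j) (Finset.notMem_erase j S)
      rw [Finset.insert_erase hj] at this
      linear_combination this
    · simp only [hj, if_false]
      exact hpair S hj
  refine Finset.sum_involution (fun S _ => if j ∈ S then S.erase j else insert j S)
    this (fun S _ hS => ?_) (fun S _ => Finset.mem_univ _) (fun S _ => ?_)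
  · by_cases hj : j ∈ S
    · simp only [hj, if_true]
      exact fun h => Finset.notMem_erase j S (h.symm ▸ hj)
    · simp only [hj, if_false]
      exact fun h => hj (h ▸ Finset.mem_insert_self j S)
  · by_cases hj : j ∈ S
    · simp [hj, Finset.notMem_erase, Finset.insert_erase hj]
    · simp [hj, Finset.erase_insert hj]
end
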